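/- Every infinite word obtained as an infinite block product ⨂_{k=0}^∞ u_k of nonempty binary words u_k, each beginning with 0 for k ≥ 1, is almost periodic. -/

import Mathlib

/-- The word `u` occurs in the sequence `x` at position `i`. -/
def occursAt {A : Type*} (x : ℕ → A) (u : List A) (i : ℕ) : Prop :=
  ∀ j : Fin u.length, x (i + (j : ℕ)) = u.get j

/-- A sequence is almost periodic (uniformly recurrent) if every factor
occurs in every sufficiently long window. -/
def AlmostPeriodic {A : Type*} (x : ℕ → A) : Prop :=
  ∀ u : List A, (∃ i, occursAt x u i) →
    ∃ l : ℕ, ∀ i : ℕ, ∃ j : ℕ, i ≤ j ∧ j + u.length ≤ i + l ∧ occursAt x u j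

/-- Bitwise complement of a binary word. -/
def complWord (u : List (Fin 2)) : List (Fin 2) := u.map (fun b => 1 - b)

/-- The block product `u ⊗ v`, defined by `u ⊗ Λ = Λ`,
`u ⊗ (v·0) = (u ⊗ v)·u`, `u ⊗ (v·1) = (u ⊗ v)·ū`. -/
def blockProd (u v : List (Fin 2)) : List (Fin 2) :=
  v.foldl (fun acc c => acc ++ (if c = 0 then u else complWord u)) []

/-- The finite block products `⨂_{k=0}^n u_k`. -/
def partialBlockProd (u : ℕ → List (Fin 2)) : ℕ → List (Fin 2)
  | 0 => u 0
  | n + 1 => blockProd (partialBlockProd u n) (u (n + 1))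


/-!
Write `P n = ⨂_{k ≤ n} u k`. The block product is associative, so `P (n + k) = P n ⊗ S` with
`S = u (n + 1) ⊗ ⋯ ⊗ u (n + k)`: it is a concatenation of blocks `P n + σ`, one for each letter `σ`
of `S`. Since every `u k` with `k ≥ 1` contains `0`, the sets of letters of these tail products grow
with `k`, hence stabilise from some `k` on. A factor `w` of `x` lies in some `P n`; put
`B = P (n + k) = P n ⊗ W`. Then `x` is a concatenation of blocks `B + σ = P n ⊗ (W + σ)` with `σ`
a letter of `W`, so `W + σ` contains `0` and every block contains `P n`, hence `w`. Thus `w` occurs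
in every window of length `2 |B|`.
-/

open List

section Occurrence

variable {A : Type*} {x : ℕ → A}

theorem occursAt_append {U V : List A} {p : ℕ} :
    occursAt x (U ++ V) p ↔ occursAt x U p ∧ occursAt x V (p + U.length) := by
  simp only [occursAt, Fin.forall_iff, length_append, get_eq_getElem]
  constructor
  · intro h
    refine ⟨fun j hj => ?_, fun j hj => ?_⟩
    · rw [h j (by omega), getElem_append_left]
    · rw [Nat.add_assoc, h _ (by omega), getElem_append_right (by omega)]
      simp
  · rintro ⟨hU, hV⟩ j hj
    by_cases hjU : j < U.length
    · rw [hU j hjU, getElem_append_left]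
    · obtain ⟨i, rfl⟩ := Nat.exists_eq_add_of_le (not_lt.1 hjU)
      rw [← Nat.add_assoc, hV i (by omega), getElem_append_right (by omega)]
      simp

theorem occursAt.exists_of_isInfix {U w : List A} {p : ℕ} (h : occursAt x U p) (hw : w <:+: U) :
    ∃ j, p ≤ j ∧ j + w.length ≤ p + U.length ∧ occursAt x w j := by
  obtain ⟨s, t, rfl⟩ := hw
  rw [occursAt_append, occursAt_append] at h
  refine ⟨p + s.length, le_self_add, ?_, h.1.2⟩
  simp only [length_append]
  omega

theorem isInfix_of_occursAt {U w : List A} {i : ℕ} (hU : occursAt x U 0) (hw : occursAt x w i)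
    (hi : i + w.length ≤ U.length) : w <:+: U := by
  have hwU : w = (U.drop i).take w.length := by
    refine ext_getElem (by simp; omega) fun j hj _ => ?_
    have hx := hU ⟨i + j, by omega⟩
    have hwj := hw ⟨j, hj⟩
    simp only [get_eq_getElem, zero_add] at hx hwj
    simp [← hwj, hx]
  rw [hwU]
  exact (take_prefix _ _).isInfix.trans (drop_suffix _ _).isInfix

theorem exists_window_of_forall_block {w : List A} {L : ℕ} (hL : 0 < L)
    (h : ∀ Q, ∃ j, Q * L ≤ j ∧ j + w.length ≤ (Q + 1) * L ∧ occursAt x w j) :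
    ∃ l, ∀ i, ∃ j, i ≤ j ∧ j + w.length ≤ i + l ∧ occursAt x w j := by
  refine ⟨2 * L, fun i => ?_⟩
  obtain ⟨j, hQj, hjQ, hj⟩ := h (i / L + 1)
  have := Nat.lt_div_mul_add (a := i) hL
  have := Nat.div_mul_le_self i L
  exact ⟨j, by nlinarith, by nlinarith, hj⟩

end Occurrence

section BlockProduct

variable {U v : List (Fin 2)}

theorem blockProd_eq_flatMap (U v : List (Fin 2)) :
    blockProd U v = v.flatMap fun c => U.map (· + c) := by
  have hblock : ∀ c : Fin 2, (if c = 0 then U else complWord U) = U.map (· + c) := by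
    intro c
    fin_cases c
    · simp
    · simp only [complWord]
      exact map_congr_left fun b _ => by fin_cases b <;> rfl
  simp only [blockProd, hblock, flatMap_eq_foldl]

theorem length_blockProd (U v : List (Fin 2)) :
    (blockProd U v).length = U.length * v.length := by
  simp [blockProd_eq_flatMap, Nat.mul_comm]

theorem blockProd_singleton_zero (U : List (Fin 2)) : blockProd U [0] = U := by
  simp [blockProd_eq_flatMap]

theorem blockProd_assoc (U V W : List (Fin 2)) :
    blockProd (blockProd U V) W = blockProd U (blockProd V W) := by
  simp [blockProd_eq_flatMap, map_flatMap, flatMap_assoc, flatMap_map]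

theorem map_add_blockProd (U v : List (Fin 2)) (c : Fin 2) :
    (blockProd U v).map (· + c) = blockProd U (v.map (· + c)) := by
  simp [blockProd_eq_flatMap, map_flatMap, flatMap_map]

theorem add_mem_blockProd {a b : Fin 2} (ha : a ∈ U) (hb : b ∈ v) : a + b ∈ blockProd U v := by
  rw [blockProd_eq_flatMap, mem_flatMap]
  exact ⟨b, hb, mem_map_of_mem ha⟩

theorem isInfix_blockProd (h : 0 ∈ v) : U <:+: blockProd U v := by
  simpa [blockProd_eq_flatMap] using infix_flatMap_of_mem h fun c => U.map (· + c)

theorem isInfix_map_add_blockProd {w V : List (Fin 2)} {σ : Fin 2} (hw : w <:+: U) (hσ : σ ∈ V) :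
    w <:+: (blockProd U V).map (· + σ) := by
  rw [map_add_blockProd]
  exact hw.trans (isInfix_blockProd (mem_map.2 ⟨σ, hσ, by fin_cases σ <;> rfl⟩))

theorem occursAt.block {x : ℕ → Fin 2} {p : ℕ} (h : occursAt x (blockProd U v) p)
    {q : ℕ} (hq : q < v.length) : occursAt x (U.map (· + v[q])) (p + q * U.length) := by
  induction v generalizing p q with
  | nil => simp at hq
  | cons c v ih =>
    rw [blockProd_eq_flatMap, flatMap_cons, occursAt_append, ← blockProd_eq_flatMap] at h
    cases q with
    | zero => simpa using h.1
    | succ q =>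
      simpa [Nat.succ_mul, Nat.add_assoc, Nat.add_comm U.length] using
        ih h.2 (Nat.lt_of_succ_lt_succ hq)

end BlockProduct

/-- `blockProdFrom u n k = u (n + 1) ⊗ ⋯ ⊗ u (n + k)`, the empty product being `[0]`. -/
def blockProdFrom (u : ℕ → List (Fin 2)) (n : ℕ) : ℕ → List (Fin 2)
  | 0 => [0]
  | k + 1 => blockProd (blockProdFrom u n k) (u (n + k + 1))

section BlockProdFrom

theorem partialBlockProd_add (u : ℕ → List (Fin 2)) (n k : ℕ) :
    partialBlockProd u (n + k) = blockProd (partialBlockProd u n) (blockProdFrom u n k) := by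
  induction k with
  | zero => simp [blockProdFrom, blockProd_singleton_zero]
  | succ k ih => rw [← Nat.add_assoc, partialBlockProd, ih, blockProdFrom, blockProd_assoc]

theorem blockProdFrom_add (u : ℕ → List (Fin 2)) (n k l : ℕ) :
    blockProdFrom u n (k + l) = blockProd (blockProdFrom u n k) (blockProdFrom u (n + k) l) := by
  induction l with
  | zero => simp [blockProdFrom, blockProd_singleton_zero]
  | succ l ih =>
    rw [← Nat.add_assoc, blockProdFrom, ih, blockProdFrom, blockProd_assoc, ← Nat.add_assoc n]

variable {u : ℕ → List (Fin 2)}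

theorem zero_mem_blockProdFrom (h0 : ∀ k, 1 ≤ k → (0 : Fin 2) ∈ u k) (n k : ℕ) :
    0 ∈ blockProdFrom u n k := by
  induction k with
  | zero => exact mem_singleton_self 0
  | succ k ih => simpa [blockProdFrom] using add_mem_blockProd ih (h0 (n + k + 1) (by omega))

theorem length_partialBlockProd_mono (h0 : ∀ k, 1 ≤ k → (0 : Fin 2) ∈ u k) :
    Monotone fun n => (partialBlockProd u n).length := by
  refine monotone_nat_of_le_succ fun n => ?_
  rw [partialBlockProd_add, length_blockProd]
  exact Nat.le_mul_of_pos_right _ (length_pos_of_mem (zero_mem_blockProdFrom h0 n 1))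

theorem exists_forall_mem_blockProdFrom (h0 : ∀ k, 1 ≤ k → (0 : Fin 2) ∈ u k) (n : ℕ) :
    ∃ k, ∀ l, ∀ σ ∈ blockProdFrom u (n + k) l, σ ∈ blockProdFrom u n k := by
  let letters : ℕ →o Set (Fin 2) :=
    ⟨fun k => {c | c ∈ blockProdFrom u n k}, monotone_nat_of_le_succ fun k c hc => by
      simpa [blockProdFrom_add] using add_mem_blockProd hc (zero_mem_blockProdFrom h0 (n + k) 1)⟩
  obtain ⟨k, hk⟩ := WellFoundedGT.monotone_chain_condition letters
  refine ⟨k, fun l σ hσ => ?_⟩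
  have hσ' : σ ∈ letters (k + l) := by
    simpa [letters, blockProdFrom_add] using add_mem_blockProd (zero_mem_blockProdFrom h0 n k) hσ
  rwa [← hk (k + l) le_self_add] at hσ'

end BlockProdFrom

/-- Any infinite word obtained as an infinite block product of nonempty binary
words, each beginning with `0` for `k ≥ 1`, is almost periodic.  The infinite
word `x` is the limit of the chain of prefixes `⨂_{k=0}^n u_k`. -/
theorem blockProd_almostPeriodic (u : ℕ → List (Fin 2))
    (hne : ∀ k, u k ≠ []) (h0 : ∀ k, 1 ≤ k → (u k).head? = some 0)
    (x : ℕ → Fin 2)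
    (hpref : ∀ n, occursAt x (partialBlockProd u n) 0)
    (hlen : ∀ m : ℕ, ∃ n : ℕ, m ≤ (partialBlockProd u n).length) :
    AlmostPeriodic x := by
  have h0' : ∀ k, 1 ≤ k → (0 : Fin 2) ∈ u k := fun k hk => mem_of_mem_head? (h0 k hk)
  rintro w ⟨i, hw⟩
  obtain ⟨n, hn⟩ := hlen (i + w.length)
  have hwP : w <:+: partialBlockProd u n := isInfix_of_occursAt (hpref n) hw hn
  obtain ⟨k, hk⟩ := exists_forall_mem_blockProdFrom h0' n
  set B := partialBlockProd u (n + k) with hB_def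
  have hB : 0 < B.length := (length_pos_iff.2 (hne 0)).trans_le
    (length_partialBlockProd_mono h0' (Nat.zero_le _))
  refine exists_window_of_forall_block hB fun Q => ?_
  obtain ⟨m, hm⟩ := hlen ((Q + 1) * B.length)
  set S := blockProdFrom u (n + k) m
  have hBS : partialBlockProd u (n + k + m) = blockProd B S := partialBlockProd_add u (n + k) m
  have hQ : Q < S.length := by
    have : (Q + 1) * B.length ≤ (partialBlockProd u (n + k + m)).length :=
      hm.trans (length_partialBlockProd_mono h0' (Nat.le_add_left m (n + k)))
    rw [hBS, length_blockProd, Nat.mul_comm] at this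
    exact Nat.le_of_mul_le_mul_left this hB
  have hblock : occursAt x (B.map (· + S[Q])) (Q * B.length) := by
    have hP := hpref (n + k + m)
    rw [hBS] at hP
    simpa only [zero_add] using hP.block hQ
  have hwB : w <:+: B.map (· + S[Q]) := by
    rw [hB_def, partialBlockProd_add]
    exact isInfix_map_add_blockProd hwP (hk m _ (getElem_mem hQ))
  obtain ⟨j, hQj, hjQ, hj⟩ := hblock.exists_of_isInfix hwB
  exact ⟨j, hQj, by simpa [Nat.succ_mul] using hjQ, hj⟩
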